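/- arXiv:1001.2218 — 4 statements merged into one kernel-verified Lean document; each statement's English description precedes it below -/
import Mathlib

section
/- Let P1, P2, N3 > 0 be fixed. As N2 → 0⁺, sup over γ ∈ (0,1] of (1/2)·log(1 + (√((1−γ)P1)+√(P2−D))²/(N3+D+γP1)) with D = P2·N2/(N2+γP1) converges to (1/2)·log(1 + (√P1+√P2)²/N3). -/
open Real Filter

theorem stmt_5 (P1 P2 N3 : ℝ) (hP1 : 0 < P1) (hP2 : 0 < P2) (hN3 : 0 < N3) :
    Tendsto (fun N2 : ℝ =>
      sSup ((fun γ : ℝ =>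
        (1 / 2) * Real.log (1 +
          (Real.sqrt ((1 - γ) * P1) + Real.sqrt (P2 - P2 * N2 / (N2 + γ * P1))) ^ 2 /
            (N3 + P2 * N2 / (N2 + γ * P1) + γ * P1))) '' Set.Ioc 0 1))
      (nhdsWithin 0 (Set.Ioi 0))
      (nhds ((1 / 2) * Real.log (1 + (Real.sqrt P1 + Real.sqrt P2) ^ 2 / N3))) := by
  set L := (1 / 2) * Real.log (1 + (Real.sqrt P1 + Real.sqrt P2) ^ 2 / N3) with hL
  have hsP1 := Real.sqrt_nonneg P1
  have hsP2 := Real.sqrt_nonneg P2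
  -- generic bound: each element of the set is ≤ L
  have key : ∀ N2 : ℝ, 0 < N2 → ∀ γ ∈ Set.Ioc (0:ℝ) 1,
      (1 / 2) * Real.log (1 +
          (Real.sqrt ((1 - γ) * P1) + Real.sqrt (P2 - P2 * N2 / (N2 + γ * P1))) ^ 2 /
            (N3 + P2 * N2 / (N2 + γ * P1) + γ * P1)) ≤ L := by
    intro N2 hN2 γ hγ
    obtain ⟨hγ0, hγ1⟩ := hγ
    have hden : 0 < N2 + γ * P1 := by positivity
    have hD0 : 0 ≤ P2 * N2 / (N2 + γ * P1) := by positivity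
    set D := P2 * N2 / (N2 + γ * P1) with hDdef
    have hnum : (Real.sqrt ((1 - γ) * P1) + Real.sqrt (P2 - D)) ^ 2
        ≤ (Real.sqrt P1 + Real.sqrt P2) ^ 2 := by
      have h1 : Real.sqrt ((1 - γ) * P1) ≤ Real.sqrt P1 := by
        apply Real.sqrt_le_sqrt; nlinarith
      have h2 : Real.sqrt (P2 - D) ≤ Real.sqrt P2 := by
        apply Real.sqrt_le_sqrt; linarith
      have h3 := Real.sqrt_nonneg ((1 - γ) * P1)
      have h4 := Real.sqrt_nonneg (P2 - D)
      nlinarith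
    have hnum0 : 0 ≤ (Real.sqrt ((1 - γ) * P1) + Real.sqrt (P2 - D)) ^ 2 := sq_nonneg _
    have hden2 : (0:ℝ) < N3 + D + γ * P1 := by positivity
    have hfrac : (Real.sqrt ((1 - γ) * P1) + Real.sqrt (P2 - D)) ^ 2 / (N3 + D + γ * P1)
        ≤ (Real.sqrt P1 + Real.sqrt P2) ^ 2 / N3 := by
      apply div_le_div₀ (by positivity) hnum hN3 (by nlinarith)
    have h1pos : (0:ℝ) < 1 + (Real.sqrt ((1 - γ) * P1) + Real.sqrt (P2 - D)) ^ 2 /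
        (N3 + D + γ * P1) := by positivity
    have hlog : Real.log (1 + (Real.sqrt ((1 - γ) * P1) + Real.sqrt (P2 - D)) ^ 2 /
        (N3 + D + γ * P1)) ≤ Real.log (1 + (Real.sqrt P1 + Real.sqrt P2) ^ 2 / N3) :=
      Real.log_le_log h1pos (by linarith)
    rw [hL]
    linarith
  -- the lower-bound choice γ = √N2 and its limit
  have hs0 : Tendsto (fun N2 : ℝ => Real.sqrt N2) (nhdsWithin 0 (Set.Ioi 0)) (nhds 0) := by
    have := (Real.continuous_sqrt.tendsto 0).mono_left
      (nhdsWithin_le_nhds (s := Set.Ioi (0:ℝ)))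
    simpa using this
  have hDlim : Tendsto (fun N2 : ℝ => P2 * N2 / (N2 + Real.sqrt N2 * P1))
      (nhdsWithin 0 (Set.Ioi 0)) (nhds 0) := by
    have heq : ∀ᶠ N2 in nhdsWithin (0:ℝ) (Set.Ioi 0),
        P2 * Real.sqrt N2 / (Real.sqrt N2 + P1)
          = P2 * N2 / (N2 + Real.sqrt N2 * P1) := by
      filter_upwards [self_mem_nhdsWithin] with N2 hN2
      have hN2' : (0:ℝ) < N2 := hN2
      have hsq : Real.sqrt N2 * Real.sqrt N2 = N2 := Real.mul_self_sqrt hN2'.le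
      have hspos : 0 < Real.sqrt N2 := Real.sqrt_pos.mpr hN2'
      have hd1 : (0:ℝ) < Real.sqrt N2 + P1 := by positivity
      have hd2 : (0:ℝ) < N2 + Real.sqrt N2 * P1 := by positivity
      rw [div_eq_div_iff hd1.ne' hd2.ne']
      linear_combination P2 * P1 * hsq
    refine Tendsto.congr' heq ?_
    have : Tendsto (fun N2 : ℝ => P2 * Real.sqrt N2 / (Real.sqrt N2 + P1))
        (nhdsWithin 0 (Set.Ioi 0)) (nhds (P2 * 0 / (0 + P1))) := by
      exact (tendsto_const_nhds.mul hs0).div (hs0.add tendsto_const_nhds)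
        (by simpa using hP1.ne')
    simpa using this
  have hlower : Tendsto (fun N2 : ℝ =>
      (1 / 2) * Real.log (1 +
        (Real.sqrt ((1 - Real.sqrt N2) * P1)
            + Real.sqrt (P2 - P2 * N2 / (N2 + Real.sqrt N2 * P1))) ^ 2 /
          (N3 + P2 * N2 / (N2 + Real.sqrt N2 * P1) + Real.sqrt N2 * P1)))
      (nhdsWithin 0 (Set.Ioi 0)) (nhds L) := by
    have t1 : Tendsto (fun N2 : ℝ => (1 - Real.sqrt N2) * P1)
        (nhdsWithin 0 (Set.Ioi 0)) (nhds P1) := by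
      have := ((tendsto_const_nhds (x := (1:ℝ))).sub hs0).mul (tendsto_const_nhds (x := P1))
      simpa using this
    have t2 : Tendsto (fun N2 : ℝ => Real.sqrt ((1 - Real.sqrt N2) * P1))
        (nhdsWithin 0 (Set.Ioi 0)) (nhds (Real.sqrt P1)) := t1.sqrt
    have t3 : Tendsto (fun N2 : ℝ => Real.sqrt (P2 - P2 * N2 / (N2 + Real.sqrt N2 * P1)))
        (nhdsWithin 0 (Set.Ioi 0)) (nhds (Real.sqrt P2)) := by
      have := (tendsto_const_nhds (x := P2)).sub hDlim
      simpa using this.sqrt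
    have tnum : Tendsto (fun N2 : ℝ =>
        (Real.sqrt ((1 - Real.sqrt N2) * P1)
            + Real.sqrt (P2 - P2 * N2 / (N2 + Real.sqrt N2 * P1))) ^ 2)
        (nhdsWithin 0 (Set.Ioi 0)) (nhds ((Real.sqrt P1 + Real.sqrt P2) ^ 2)) :=
      (t2.add t3).pow 2
    have tden : Tendsto (fun N2 : ℝ =>
        N3 + P2 * N2 / (N2 + Real.sqrt N2 * P1) + Real.sqrt N2 * P1)
        (nhdsWithin 0 (Set.Ioi 0)) (nhds N3) := by
      have := ((tendsto_const_nhds (x := N3)).add hDlim).add (hs0.mul (tendsto_const_nhds (x := P1)))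
      simpa using this
    have tfrac := tnum.div tden hN3.ne'
    have targ := (tendsto_const_nhds (x := (1:ℝ))).add tfrac
    have hpos : (0:ℝ) < 1 + (Real.sqrt P1 + Real.sqrt P2) ^ 2 / N3 := by positivity
    have tlog := (Real.continuousAt_log hpos.ne').tendsto.comp targ
    exact tendsto_const_nhds.mul tlog
  -- squeeze
  have hmem : ∀ᶠ N2 in nhdsWithin (0:ℝ) (Set.Ioi 0), N2 ∈ Set.Ioc (0:ℝ) 1 := by
    have : Set.Ioc (0:ℝ) 1 ∈ nhdsWithin (0:ℝ) (Set.Ioi 0) :=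
      Ioc_mem_nhdsGT_of_mem ⟨le_rfl, one_pos⟩
    exact this
  refine tendsto_of_tendsto_of_tendsto_of_le_of_le' hlower tendsto_const_nhds ?_ ?_
  · filter_upwards [hmem] with N2 hN2
    obtain ⟨hN2, hN21⟩ := hN2
    have hsmem : Real.sqrt N2 ∈ Set.Ioc (0:ℝ) 1 :=
      ⟨Real.sqrt_pos.mpr hN2, Real.sqrt_le_one.mpr hN21⟩
    apply le_csSup
    · exact ⟨L, by rintro _ ⟨γ, hγ, rfl⟩; exact key N2 hN2 γ hγ⟩
    · exact ⟨Real.sqrt N2, hsmem, rfl⟩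
  · filter_upwards [hmem] with N2 hN2
    apply csSup_le
    · exact ⟨_, ⟨1, ⟨one_pos, le_rfl⟩, rfl⟩⟩
    · rintro _ ⟨γ, hγ, rfl⟩; exact key N2 hN2.1 γ hγ
end

section
/- For positive reals P1, P2, N3, Q and for all ρ12 ∈ [0,1], ϱ1s ∈ [−1,0] with ρ12² + ϱ1s² ≤ 1, the second term of the upper bound, namely (1/2)log(1 + (√P2 + ρ12√P1)²/(P1(1−ρ12²−ϱ1s²) + (√ΔQ + ϱ1s√P1)² + N3)) + (1/2)log(1 + P1(1−ρ12²−ϱ1s²)/N3) with ΔQ = Q·N2/((√Q+√P1)²+N2), is less than or equal to the corresponding cut-set term obtained by setting ΔQ = 0 and optimizing ϱ1s, i.e., (1/2)log(1 + (P1 + P2 + 2ρ12√(P1P2))/N3). -/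
open Real

theorem stmt_10 (P1 P2 N2 N3 Q : ℝ) (hP1 : 0 < P1) (hP2 : 0 < P2) (hN2 : 0 < N2)
    (hN3 : 0 < N3) (hQ : 0 < Q)
    (ρ12 ϱ1s : ℝ) (hρ : ρ12 ∈ Set.Icc (0:ℝ) 1) (hϱ : ϱ1s ∈ Set.Icc (-1:ℝ) 0)
    (hsum : ρ12 ^ 2 + ϱ1s ^ 2 ≤ 1) :
    (1 / 2) * Real.log (1 + (Real.sqrt P2 + ρ12 * Real.sqrt P1) ^ 2 /
        (P1 * (1 - ρ12 ^ 2 - ϱ1s ^ 2)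
          + (Real.sqrt (Q * N2 / ((Real.sqrt Q + Real.sqrt P1) ^ 2 + N2))
              + ϱ1s * Real.sqrt P1) ^ 2 + N3))
      + (1 / 2) * Real.log (1 + P1 * (1 - ρ12 ^ 2 - ϱ1s ^ 2) / N3)
    ≤ (1 / 2) * Real.log (1 + (P1 + P2 + 2 * ρ12 * Real.sqrt (P1 * P2)) / N3) := by
  obtain ⟨hρ0, hρ1⟩ := hρ
  set a : ℝ := Real.sqrt P2 + ρ12 * Real.sqrt P1 with ha
  set s : ℝ := P1 * (1 - ρ12 ^ 2 - ϱ1s ^ 2) with hs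
  set b : ℝ := (Real.sqrt (Q * N2 / ((Real.sqrt Q + Real.sqrt P1) ^ 2 + N2))
              + ϱ1s * Real.sqrt P1) ^ 2 with hb
  set T : ℝ := P1 + P2 + 2 * ρ12 * Real.sqrt (P1 * P2) with hT
  have hs0 : 0 ≤ s := by
    apply mul_nonneg hP1.le; nlinarith
  have hb0 : 0 ≤ b := sq_nonneg _
  have hD : 0 < s + b + N3 := by linarith
  have hsq1 : Real.sqrt P1 ^ 2 = P1 := Real.sq_sqrt hP1.le
  have hsq2 : Real.sqrt P2 ^ 2 = P2 := Real.sq_sqrt hP2.le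
  have hsqm : Real.sqrt (P1 * P2) = Real.sqrt P1 * Real.sqrt P2 := Real.sqrt_mul hP1.le P2
  have hTge : a ^ 2 + s ≤ T := by
    rw [ha, hs, hT, hsqm]; nlinarith [sq_nonneg ϱ1s, hP1.le]
  have hx : (0:ℝ) < 1 + a ^ 2 / (s + b + N3) := by positivity
  have hy : (0:ℝ) < 1 + s / N3 := by positivity
  have hmul : (1 + a ^ 2 / (s + b + N3)) * (1 + s / N3) ≤ 1 + T / N3 := by
    rw [add_div' _ _ _ hD.ne', add_div' _ _ _ hN3.ne', add_div' _ _ _ hN3.ne',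
      div_mul_div_comm, div_le_div_iff₀ (by positivity) hN3]
    nlinarith [mul_pos hD hN3,
      mul_nonneg (mul_nonneg (sub_nonneg.2 hTge) hD.le) hN3.le,
      mul_nonneg (mul_nonneg hb0 (sq_nonneg a)) hN3.le]
  have hlog : Real.log (1 + a ^ 2 / (s + b + N3)) + Real.log (1 + s / N3)
      ≤ Real.log (1 + T / N3) := by
    rw [← Real.log_mul hx.ne' hy.ne']
    exact Real.log_le_log (by positivity) hmul
  linarith
end

section
/- For fixed positive P, N2, N3 and Q → ∞, sup over α ∈ ℝ of min{R(α,P,Q,N2), R(α,P,Q,N3)} converges to (1/2)·log(1 + P/max(N2,N3)), where R(α,P,Q,N) = (1/2)log(P(P+Q+N)/(PQ(1−α)² + N(P+α²Q))). -/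
open Real Filter

private lemma aux_main (P N' N : ℝ) (hP : 0 < P) (hN' : 0 < N') (hN'N : N' ≤ N) :
    Tendsto (fun Q : ℝ =>
      sSup (Set.range (fun α : ℝ =>
        min ((1 / 2) * Real.log (P * (P + Q + N') / (P * Q * (1 - α) ^ 2 + N' * (P + α ^ 2 * Q))))
            ((1 / 2) * Real.log (P * (P + Q + N) / (P * Q * (1 - α) ^ 2 + N * (P + α ^ 2 * Q)))))))
      atTop (nhds ((1 / 2) * Real.log (1 + P / N))) := by
  have hN : 0 < N := hN'.trans_le hN'N
  have hPN : 0 < P + N := by linarith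
  set αs : ℝ := P / (P + N) with hαs
  have hαpos : 0 < αs := by positivity
  set L : ℝ := (1 / 2) * Real.log ((P + N) / N) with hL
  have hLeq : (1 / 2) * Real.log (1 + P / N) = L := by
    rw [hL]; congr 2; field_simp; ring
  rw [hLeq]
  have hden : ∀ (Q α : ℝ), (P + N) * (P * Q * (1 - α) ^ 2 + N * (P + α ^ 2 * Q))
      = N * P * (P + Q + N) + Q * ((P + N) * α - P) ^ 2 := by intro Q α; ring
  -- Upper bound
  have hub : ∀ Q : ℝ, 0 < Q → ∀ α : ℝ,
      min ((1 / 2) * Real.log (P * (P + Q + N') / (P * Q * (1 - α) ^ 2 + N' * (P + α ^ 2 * Q))))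
          ((1 / 2) * Real.log (P * (P + Q + N) / (P * Q * (1 - α) ^ 2 + N * (P + α ^ 2 * Q)))) ≤ L := by
    intro Q hQ α
    refine le_trans (min_le_right _ _) ?_
    have hPQN : 0 < P + Q + N := by linarith
    have hDlb : N * P * (P + Q + N) / (P + N) ≤ P * Q * (1 - α) ^ 2 + N * (P + α ^ 2 * Q) := by
      rw [div_le_iff₀ hPN]
      nlinarith [sq_nonneg ((P + N) * α - P), hden Q α]
    have hDpos : 0 < P * Q * (1 - α) ^ 2 + N * (P + α ^ 2 * Q) :=
      lt_of_lt_of_le (by positivity) hDlb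
    have harg : P * (P + Q + N) / (P * Q * (1 - α) ^ 2 + N * (P + α ^ 2 * Q)) ≤ (P + N) / N := by
      rw [div_le_div_iff₀ hDpos hN]
      have := (div_le_iff₀ hPN).mp hDlb
      nlinarith
    have hargpos : 0 < P * (P + Q + N) / (P * Q * (1 - α) ^ 2 + N * (P + α ^ 2 * Q)) := by positivity
    have := Real.log_le_log hargpos harg
    rw [hL]; linarith
  -- value of the N-term at αs
  have hNterm : ∀ Q : ℝ, 0 < Q →
      (1 / 2) * Real.log (P * (P + Q + N) / (P * Q * (1 - αs) ^ 2 + N * (P + αs ^ 2 * Q))) = L := by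
    intro Q hQ
    have hPQN : 0 < P + Q + N := by linarith
    have hzero : (P + N) * αs - P = 0 := by rw [hαs]; field_simp; ring
    have hDval : P * Q * (1 - αs) ^ 2 + N * (P + αs ^ 2 * Q) = N * P * (P + Q + N) / (P + N) := by
      have h1 := hden Q αs
      rw [hzero] at h1
      field_simp at h1 ⊢
      linarith [h1]
    rw [hL]; congr 2
    rw [hDval, div_div_eq_mul_div, div_eq_div_iff (by positivity) hN.ne']
    ring
  -- the N'-term at αs and its limit
  set A : ℝ := P * (1 - αs) ^ 2 + N' * αs ^ 2 with hA
  have hApos : 0 < A := by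
    have h1 : 0 < N' * αs ^ 2 := by positivity
    nlinarith [sq_nonneg (1 - αs)]
  have hc : L ≤ (1 / 2) * Real.log (P / A) := by
    have h1 : (P + N) / N ≤ P / A := by
      rw [div_le_div_iff₀ hN hApos]
      have hPN2 : (0:ℝ) < (P + N)^2 := by positivity
      have hAval : A = (P * N ^ 2 + N' * P ^ 2) / (P + N) ^ 2 := by
        rw [hA, hαs]; field_simp; ring
      rw [hAval, ← mul_div_assoc, div_le_iff₀ hPN2]
      nlinarith [mul_nonneg (mul_nonneg hPN.le (sq_nonneg P)) (sub_nonneg.mpr hN'N)]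
    have := Real.log_le_log (by positivity) h1
    rw [hL]; linarith
  -- limit of the argument of the N'-term at αs
  have harg : Tendsto (fun Q : ℝ => P * (P + Q + N') / (P * Q * (1 - αs) ^ 2 + N' * (P + αs ^ 2 * Q)))
      atTop (nhds (P / A)) := by
    have h1 : Tendsto (fun Q : ℝ => P + P * (P + N') / Q) atTop (nhds (P + 0)) :=
      tendsto_const_nhds.add (tendsto_const_nhds.div_atTop tendsto_id)
    have h2 : Tendsto (fun Q : ℝ => A + N' * P / Q) atTop (nhds (A + 0)) :=
      tendsto_const_nhds.add (tendsto_const_nhds.div_atTop tendsto_id)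
    have h3 := h1.div h2 (by simpa using hApos.ne')
    simp only [add_zero] at h3
    refine h3.congr' ?_
    filter_upwards [eventually_gt_atTop (0:ℝ)] with Q hQ
    have hden' : P * Q * (1 - αs) ^ 2 + N' * (P + αs ^ 2 * Q) = A * Q + N' * P := by
      rw [hA]; ring
    have hAQ : 0 < A * Q + N' * P := by positivity
    simp only [Pi.div_apply]
    rw [hden']
    have hA2 : 0 < A + N' * P / Q := by positivity
    rw [div_eq_div_iff hA2.ne' hAQ.ne']
    have hQ' : Q ≠ 0 := hQ.ne'
    field_simp
    ring
  have hterm' : Tendsto (fun Q : ℝ =>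
      (1 / 2) * Real.log (P * (P + Q + N') / (P * Q * (1 - αs) ^ 2 + N' * (P + αs ^ 2 * Q))))
      atTop (nhds ((1 / 2) * Real.log (P / A))) := by
    exact ((Real.continuousAt_log (by positivity)).tendsto.comp harg).const_mul (1 / 2)
  -- lower bound function tends to L
  have hglow : Tendsto (fun Q : ℝ =>
      min ((1 / 2) * Real.log (P * (P + Q + N') / (P * Q * (1 - αs) ^ 2 + N' * (P + αs ^ 2 * Q))))
          ((1 / 2) * Real.log (P * (P + Q + N) / (P * Q * (1 - αs) ^ 2 + N * (P + αs ^ 2 * Q)))))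
      atTop (nhds L) := by
    have h1 : Tendsto (fun Q : ℝ =>
        min ((1 / 2) * Real.log (P * (P + Q + N') / (P * Q * (1 - αs) ^ 2 + N' * (P + αs ^ 2 * Q)))) L)
        atTop (nhds (min ((1 / 2) * Real.log (P / A)) L)) := hterm'.min tendsto_const_nhds
    rw [min_eq_right hc] at h1
    refine h1.congr' ?_
    filter_upwards [eventually_gt_atTop (0:ℝ)] with Q hQ
    rw [hNterm Q hQ]
  -- squeeze
  refine tendsto_of_tendsto_of_tendsto_of_le_of_le' hglow tendsto_const_nhds ?_ ?_
  · filter_upwards [eventually_gt_atTop (0:ℝ)] with Q hQ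
    exact le_csSup ⟨L, by rintro x ⟨α, rfl⟩; exact hub Q hQ α⟩ ⟨αs, rfl⟩
  · filter_upwards [eventually_gt_atTop (0:ℝ)] with Q hQ
    exact csSup_le (Set.range_nonempty _) (by rintro x ⟨α, rfl⟩; exact hub Q hQ α)

theorem stmt_14 (P N2 N3 : ℝ) (hP : 0 < P) (hN2 : 0 < N2) (hN3 : 0 < N3) :
    Tendsto (fun Q : ℝ =>
      sSup (Set.range (fun α : ℝ =>
        min ((1 / 2) * Real.log (P * (P + Q + N2) / (P * Q * (1 - α) ^ 2 + N2 * (P + α ^ 2 * Q))))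
            ((1 / 2) * Real.log (P * (P + Q + N3) / (P * Q * (1 - α) ^ 2 + N3 * (P + α ^ 2 * Q)))))))
      atTop (nhds ((1 / 2) * Real.log (1 + P / max N2 N3))) := by
  rcases le_total N2 N3 with h | h
  · rw [max_eq_right h]
    exact aux_main P N2 N3 hP hN2 h
  · rw [max_eq_left h]
    refine (aux_main P N3 N2 hP hN3 h).congr fun Q => ?_
    exact congrArg sSup (congrArg Set.range (funext fun α => min_comm _ _))
end

section
/- For any positive reals P, Q, N2, N3 with N2 ≠ N3 and any α ∈ ℝ, min{R(α,P,Q,N2), R(α,P,Q,N3)} ≤ (1/2)·log(1 + P/max(N2,N3)), where R(α,P,Q,N) = (1/2)log(P(P+Q+N)/(PQ(1−α)² + N(P+α²Q))). -/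
open Real

lemma key_bound (P Q N : ℝ) (hP : 0 < P) (hQ : 0 < Q) (hN : 0 < N) (α : ℝ) :
    (1 / 2) * Real.log (P * (P + Q + N) / (P * Q * (1 - α) ^ 2 + N * (P + α ^ 2 * Q))) ≤
      (1 / 2) * Real.log (1 + P / N) := by
  have hD : 0 < P * Q * (1 - α) ^ 2 + N * (P + α ^ 2 * Q) := by positivity
  have h1 : (1 : ℝ) + P / N = (N + P) / N := by field_simp
  rw [h1]
  have hratio : P * (P + Q + N) / (P * Q * (1 - α) ^ 2 + N * (P + α ^ 2 * Q)) ≤ (N + P) / N := by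
    rw [div_le_div_iff₀ hD hN]
    nlinarith [sq_nonneg (P * (1 - α) - N * α)]
  gcongr
  all_goals first | positivity | exact hratio

theorem stmt_15 (P Q N2 N3 : ℝ) (hP : 0 < P) (hQ : 0 < Q) (hN2 : 0 < N2)
    (hN3 : 0 < N3) (hne : N2 ≠ N3) (α : ℝ) :
    min ((1 / 2) * Real.log (P * (P + Q + N2) / (P * Q * (1 - α) ^ 2 + N2 * (P + α ^ 2 * Q))))
        ((1 / 2) * Real.log (P * (P + Q + N3) / (P * Q * (1 - α) ^ 2 + N3 * (P + α ^ 2 * Q))))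
      ≤ (1 / 2) * Real.log (1 + P / max N2 N3) := by
  rcases le_total N2 N3 with h | h
  · rw [max_eq_right h]
    exact le_trans (min_le_right _ _) (key_bound P Q N3 hP hQ hN3 α)
  · rw [max_eq_left h]
    exact le_trans (min_le_left _ _) (key_bound P Q N2 hP hQ hN2 α)
end
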